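/- arXiv:2011.10691 — 5 statements merged into one kernel-verified Lean document; each statement's English description precedes it below -/
import Mathlib

section
/- Let n ≥ 2 be an integer, 1 ≤ p ≤ n an integer, and α a complex number. Define a_{ns+p, n(s-r)} := (-α)^{s-r} · C(s + p/n, s-r) and b_{nr+p, ns+p} := α^{s-r} · C(s + p/n, s-r) for integers 0 ≤ r ≤ s. Then for all integers 0 ≤ r ≤ r', ∑_{s=r}^{r'} a_{ns+p, n(s-r)} · b_{ns+p, nr'+p} = 1 if r = r', and = 0 if r < r'. In other words, the lower-triangular matrix (a) and the matrix (b) restricted to each residue class p mod n are mutually inverse. -/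
/-- The generalized binomial coefficient C(x, k) = x(x-1)⋯(x-k+1)/k! for x ∈ ℂ. -/
noncomputable def cchoose (x : ℂ) (k : ℕ) : ℂ :=
  (∏ i ∈ Finset.range k, (x - i)) / (Nat.factorial k)

lemma descPochhammer_smeval_prod (x : ℂ) (k : ℕ) :
    (descPochhammer ℤ k).smeval x = ∏ i ∈ Finset.range k, (x - i) := by
  induction k with
  | zero => simp [descPochhammer_zero, Polynomial.smeval_one]
  | succ k ih =>
      rw [descPochhammer_succ_right, Polynomial.smeval_mul, ih, Finset.prod_range_succ]
      simp [Polynomial.smeval_sub, Polynomial.smeval_X, Polynomial.smeval_natCast]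

lemma cchoose_eq_ring_choose (x : ℂ) (k : ℕ) : cchoose x k = Ring.choose x k := by
  have h := Ring.descPochhammer_eq_factorial_smul_choose x k
  rw [descPochhammer_smeval_prod, nsmul_eq_mul] at h
  rw [cchoose, h, mul_comm, mul_div_assoc, div_self, mul_one]
  exact_mod_cast Nat.factorial_ne_zero k

/-- Chu–Vandermonde identity for generalized binomial coefficients over ℂ. -/
lemma cchoose_vandermonde (a b : ℂ) (m : ℕ) :
    ∑ j ∈ Finset.range (m+1), cchoose a j * cchoose b (m - j) = cchoose (a + b) m := by
  rw [cchoose_eq_ring_choose, Ring.add_choose_eq m (Commute.all a b),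
    Finset.Nat.sum_antidiagonal_eq_sum_range_succ_mk]
  exact Finset.sum_congr rfl fun j hj => by
    rw [cchoose_eq_ring_choose, cchoose_eq_ring_choose]

/-- Upper negation identity. -/
lemma cchoose_neg (x : ℂ) (j : ℕ) :
    cchoose (-x - 1) j = (-1)^j * cchoose (x + j) j := by
  unfold cchoose
  rw [← mul_div_assoc]
  congr 1
  calc ∏ i ∈ Finset.range j, (-x - 1 - (i:ℂ))
      = ∏ i ∈ Finset.range j, ((-1) * (x + 1 + (i:ℂ))) := by
        refine Finset.prod_congr rfl fun i _ => by ring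
    _ = (-1)^j * ∏ i ∈ Finset.range j, (x + 1 + (i:ℂ)) := by
        rw [Finset.prod_mul_distrib, Finset.prod_const, Finset.card_range]
    _ = (-1)^j * ∏ i ∈ Finset.range j, (x + (j:ℂ) - (i:ℂ)) := by
        congr 1
        rw [← Finset.prod_range_reflect (fun i => x + (j:ℂ) - (i:ℂ)) j]
        refine Finset.prod_congr rfl fun i hi => ?_
        have hi' : i < j := Finset.mem_range.mp hi
        have : ((j - 1 - i : ℕ) : ℂ) = (j:ℂ) - 1 - (i:ℂ) := by
          rw [Nat.cast_sub (by omega), Nat.cast_sub (by omega), Nat.cast_one]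
        rw [this]; ring

lemma cchoose_nat_lt (k m : ℕ) (h : k < m) : cchoose (k : ℂ) m = 0 := by
  unfold cchoose
  rw [Finset.prod_eq_zero (Finset.mem_range.mpr h) (by simp), zero_div]

/-- Lemma 5.2: the matrices (a) and (b), restricted to the residue class p mod n,
are mutually inverse.  Here `a_{ns+p, n(s-r)} = (-α)^(s-r) C(s+p/n, s-r)` and
`b_{nr+p, ns+p} = α^(s-r) C(s+p/n, s-r)`, so `b_{ns+p, nr'+p} = α^(r'-s) C(r'+p/n, r'-s)`. -/
theorem ab_inverse (n p : ℕ) (hn : 2 ≤ n) (hp1 : 1 ≤ p) (hpn : p ≤ n) (α : ℂ)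
    (r r' : ℕ) (h : r ≤ r') :
    ∑ s ∈ Finset.Icc r r',
        ((-α) ^ (s - r) * cchoose ((s : ℂ) + (p : ℂ) / (n : ℂ)) (s - r))
          * (α ^ (r' - s) * cchoose ((r' : ℂ) + (p : ℂ) / (n : ℂ)) (r' - s))
      = if r = r' then 1 else 0 := by
  set x : ℂ := (p : ℂ) / (n : ℂ) with hx
  rcases eq_or_lt_of_le h with heq | hlt
  · subst heq
    simp [cchoose]
  · rw [if_neg (Nat.ne_of_lt hlt)]
    set m := r' - r with hm
    have hm1 : 1 ≤ m := by omega
    have hrr' : r + m = r' := by omega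
    have hsum : ∑ s ∈ Finset.Icc r r',
        ((-α) ^ (s - r) * cchoose ((s : ℂ) + x) (s - r))
          * (α ^ (r' - s) * cchoose ((r' : ℂ) + x) (r' - s))
        = ∑ j ∈ Finset.range (m + 1),
        ((-α) ^ j * cchoose (((r + j : ℕ) : ℂ) + x) j)
          * (α ^ (m - j) * cchoose ((r' : ℂ) + x) (m - j)) := by
      rw [show Finset.Icc r r' = Finset.map (addLeftEmbedding r) (Finset.range (m+1)) by
          ext s
          simp [addLeftEmbedding, Finset.mem_map, Function.Embedding.coeFn_mk]
          constructor
          · rintro ⟨hs1, hs2⟩; exact ⟨s - r, by omega, by omega⟩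
          · rintro ⟨j, hj, rfl⟩; omega,
        Finset.sum_map]
      refine Finset.sum_congr rfl fun j hj => ?_
      have hj' : j ≤ m := by simpa [Nat.lt_succ_iff] using Finset.mem_range.mp hj
      have h1 : addLeftEmbedding r j - r = j := by simp [addLeftEmbedding]
      have h2 : r' - addLeftEmbedding r j = m - j := by
        simp only [addLeftEmbedding, Function.Embedding.coeFn_mk]; omega
      rw [h1, h2]
      norm_num [addLeftEmbedding]
    rw [hsum]
    have key : ∀ j ∈ Finset.range (m + 1),
        ((-α) ^ j * cchoose (((r + j : ℕ) : ℂ) + x) j)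
          * (α ^ (m - j) * cchoose ((r' : ℂ) + x) (m - j))
        = α ^ m * (cchoose (-(x + r) - 1) j * cchoose ((r' : ℂ) + x) (m - j)) := by
      intro j hj
      have hj' : j ≤ m := by have := Finset.mem_range.mp hj; omega
      have hcast : (x + (r : ℂ)) + (j : ℂ) = ((r + j : ℕ) : ℂ) + x := by push_cast; ring
      rw [cchoose_neg (x + r) j, hcast]
      have hmm : j + (m - j) = m := by omega
      calc (-α) ^ j * cchoose (((r + j : ℕ) : ℂ) + x) j *
              (α ^ (m - j) * cchoose ((r' : ℂ) + x) (m - j))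
          = ((-1:ℂ)^j * (α ^ j * α ^ (m - j))) * (cchoose (((r + j : ℕ) : ℂ) + x) j *
              cchoose ((r' : ℂ) + x) (m - j)) := by rw [neg_pow]; ring
        _ = α ^ m * ((-1:ℂ)^j * cchoose (((r + j : ℕ) : ℂ) + x) j *
              cchoose ((r' : ℂ) + x) (m - j)) := by rw [← pow_add, hmm]; ring
    rw [Finset.sum_congr rfl key, ← Finset.mul_sum, cchoose_vandermonde]
    have harg : -(x + (r : ℂ)) - 1 + ((r' : ℂ) + x) = ((m - 1 : ℕ) : ℂ) := by
      rw [Nat.cast_sub hm1, hm, Nat.cast_sub h]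
      push_cast
      ring
    rw [harg, cchoose_nat_lt (m - 1) m (by omega), mul_zero]
end

section
/- Let n ≥ 2 and 1 ≤ p ≤ n-1 be integers, and let r ≥ 1, s ≥ 0, 0 ≤ k ≤ s be integers. Then (nr-p) · C(s + p/n, s-k) · C(k + p/n, r+k) = (-1)^{r-1} · p · C(s + p/n, s) · C(r - p/n, r) · C(r+s, s-k) / C(r+s, s), where C(r+s, s) ≠ 0 is an ordinary binomial coefficient. -/
/-!
Put `x = p / n`, so that `n r - p = n (r - x)` and `p = n x`. Writing every `C(y, j)` as the falling
factorial `(y)_j / j!` and splitting `(k + x)_{r+k} = (k + x)_k (x)_r` and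
`(s + x)_s = (s + x)_{s-k} (k + x)_k`, the identity holds for every `x` once
`(r - x) C(x, r) = (-1)^(r-1) x C(r - x, r)`; this is the reflection
`(y)_m = (-1)^m (m - 1 - y)_m` of the falling factorial, applied to `(x - 1)_{r-1}`.
-/

/-- The generalized binomial coefficient C(x, k) = x(x-1)⋯(x-k+1)/k! for x ∈ ℚ. -/
def gchoose (x : ℚ) (k : ℕ) : ℚ :=
  (∏ i ∈ Finset.range k, (x - i)) / (Nat.factorial k)

open Polynomial

section
variable {R : Type*} [CommRing R]

theorem descPochhammer_eval_add (a b : ℕ) (y : R) :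
    (descPochhammer R (a + b)).eval y =
      (descPochhammer R a).eval y * (descPochhammer R b).eval (y - a) := by
  rw [← descPochhammer_mul, eval_mul, eval_comp, eval_sub, eval_X, eval_natCast]

theorem descPochhammer_eval_sub_one_sub (n : ℕ) (y : R) :
    (descPochhammer R n).eval ((n : R) - 1 - y) = (-1) ^ n * (descPochhammer R n).eval y := by
  rw [descPochhammer_eval_eq_ascPochhammer, ← ascPochhammer_eval_neg_eq_descPochhammer]
  ring_nf

theorem sub_mul_descPochhammer_eval_succ (m : ℕ) (x : R) :
    ((m : R) + 1 - x) * (descPochhammer R (m + 1)).eval x =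
      (-1) ^ m * x * (descPochhammer R (m + 1)).eval ((m : R) + 1 - x) := by
  have hreflect := descPochhammer_eval_sub_one_sub (R := R) m (x - 1)
  simp only [descPochhammer_succ_left, eval_mul, eval_X, eval_comp, eval_sub, eval_one]
  have hsq : ((-1 : R) ^ m) ^ 2 = 1 := by rw [← pow_mul, mul_comm, pow_mul, neg_one_sq, one_pow]
  rw [show (m : R) + 1 - x - 1 = m - 1 - (x - 1) by ring, hreflect]
  linear_combination -((m : R) + 1 - x) * x * (descPochhammer R m).eval (x - 1) * hsq
end

theorem gchoose_eq_descPochhammer_eval (x : ℚ) (k : ℕ) :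
    gchoose x k = (descPochhammer ℚ k).eval x / k.factorial := by
  rw [descPochhammer_eval_eq_prod_range, gchoose]

theorem sub_mul_gchoose {r : ℕ} (hr : 1 ≤ r) (x : ℚ) :
    ((r : ℚ) - x) * gchoose x r = (-1) ^ (r - 1) * x * gchoose ((r : ℚ) - x) r := by
  obtain ⟨m, rfl⟩ : ∃ m, r = m + 1 := ⟨r - 1, by omega⟩
  simp only [gchoose_eq_descPochhammer_eval, Nat.add_sub_cancel, Nat.cast_add_one]
  rw [← mul_div_assoc, sub_mul_descPochhammer_eval_succ]
  ring

theorem gchoose_mul_gchoose_mul_choose (x : ℚ) {k s : ℕ} (hk : k ≤ s) (r : ℕ) :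
    gchoose ((s : ℚ) + x) (s - k) * gchoose ((k : ℚ) + x) (r + k) * (r + s).choose s =
      gchoose ((s : ℚ) + x) s * gchoose x r * (r + s).choose (s - k) := by
  obtain ⟨j, rfl⟩ := Nat.exists_eq_add_of_le' hk
  have hsplit_s : (descPochhammer ℚ (j + k)).eval ((j + k : ℕ) + x) =
      (descPochhammer ℚ j).eval ((j + k : ℕ) + x) * (descPochhammer ℚ k).eval (k + x) := by
    rw [descPochhammer_eval_add]; push_cast; ring_nf
  have hsplit_r : (descPochhammer ℚ (r + k)).eval (k + x) =
      (descPochhammer ℚ k).eval (k + x) * (descPochhammer ℚ r).eval x := by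
    rw [add_comm r, descPochhammer_eval_add]; ring_nf
  simp only [gchoose_eq_descPochhammer_eval, Nat.add_sub_cancel, hsplit_s, hsplit_r]
  rw [Nat.cast_choose ℚ (by omega : j + k ≤ r + (j + k)),
    Nat.cast_choose ℚ (by omega : j ≤ r + (j + k)),
    show r + (j + k) - (j + k) = r by omega, show r + (j + k) - j = r + k by omega]
  field_simp

theorem gchoose_prop51_identity_general (n p r s k : ℕ) (hn : 2 ≤ n)
    (hr : 1 ≤ r) (hk : k ≤ s) :
    ((n : ℚ) * r - p) * gchoose ((s : ℚ) + (p : ℚ) / (n : ℚ)) (s - k)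
        * gchoose ((k : ℚ) + (p : ℚ) / (n : ℚ)) (r + k)
      = (-1 : ℚ) ^ (r - 1) * p * gchoose ((s : ℚ) + (p : ℚ) / (n : ℚ)) s
          * gchoose ((r : ℚ) - (p : ℚ) / (n : ℚ)) r
          * ((r + s).choose (s - k) : ℚ) / ((r + s).choose s : ℚ) := by
  set x : ℚ := (p : ℚ) / n
  have hp : (p : ℚ) = n * x := (mul_div_cancel₀ _ (Nat.cast_ne_zero.mpr (by omega))).symm
  have hchoose : ((r + s).choose s : ℚ) ≠ 0 := by
    exact_mod_cast (Nat.choose_pos (Nat.le_add_left s r)).ne'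
  rw [eq_div_iff hchoose, hp]
  linear_combination (n * ((r : ℚ) - x)) * gchoose_mul_gchoose_mul_choose x hk r
    + (n * gchoose ((s : ℚ) + x) s * (r + s).choose (s - k)) * sub_mul_gchoose hr x

/-- Identity from the proof of Proposition 5.1 of the paper. -/
theorem gchoose_prop51_identity (n p r s k : ℕ) (hn : 2 ≤ n) (hp1 : 1 ≤ p) (hpn : p ≤ n - 1)
    (hr : 1 ≤ r) (hk : k ≤ s) :
    ((n : ℚ) * r - p) * gchoose ((s : ℚ) + (p : ℚ) / (n : ℚ)) (s - k)
        * gchoose ((k : ℚ) + (p : ℚ) / (n : ℚ)) (r + k)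
      = (-1 : ℚ) ^ (r - 1) * p * gchoose ((s : ℚ) + (p : ℚ) / (n : ℚ)) s
          * gchoose ((r : ℚ) - (p : ℚ) / (n : ℚ)) r
          * ((r + s).choose (s - k) : ℚ) / ((r + s).choose s : ℚ) :=
  gchoose_prop51_identity_general n p r s k hn hr hk
end

section
/- Let n ≥ 2 and 1 ≤ p ≤ n be integers, and let r ≥ 1, s ≥ 0 be integers. Then -(nr-p) · ∑_{k=0}^{s} (-1)^{r+k} · C(s + p/n, s-k) · C(k + p/n, r+k) = (p·r/(r+s)) · C(r - p/n, r) · C(s + p/n, s). -/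
lemma gchoose_zero (x : ℚ) : gchoose x 0 = 1 := by simp [gchoose]

lemma fact_ne (k : ℕ) : ((Nat.factorial k : ℚ)) ≠ 0 := by
  exact_mod_cast (Nat.factorial_pos k).ne'

/-- back absorption -/
lemma gchoose_succ (x : ℚ) (k : ℕ) :
    gchoose x (k+1) = gchoose x k * (x - k) / (k+1) := by
  rw [gchoose, gchoose, Finset.prod_range_succ]
  have h1 := fact_ne k
  have h2 : ((k:ℚ)+1) ≠ 0 := by positivity
  have h3 : ((Nat.factorial (k+1) : ℚ)) = ((k:ℚ)+1) * (Nat.factorial k) := by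
    rw [Nat.factorial_succ]; push_cast; ring
  rw [h3, div_mul_eq_mul_div, div_div, mul_comm ((Nat.factorial k : ℚ)) ((k:ℚ)+1)]

/-- front absorption -/
lemma gchoose_succ' (x : ℚ) (k : ℕ) :
    gchoose x (k+1) = x * gchoose (x-1) k / (k+1) := by
  rw [gchoose, gchoose, Finset.prod_range_succ', Nat.factorial_succ]
  have h1 := fact_ne k
  have h2 : ((k:ℚ)+1) ≠ 0 := by positivity
  have : ∀ i ∈ Finset.range k, (x - (i+1 : ℕ)) = (x - 1 - i) := by
    intro i _; push_cast; ring
  rw [Finset.prod_congr rfl this]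
  push_cast
  rw [← mul_div_assoc, div_div, mul_comm ((Nat.factorial k : ℚ)) ((k:ℚ)+1), mul_comm x]
  norm_num

lemma gchoose_pascal (x : ℚ) (k : ℕ) :
    gchoose (x+1) (k+1) = gchoose x (k+1) + gchoose x k := by
  rw [gchoose_succ' (x+1) k, gchoose_succ x k]
  have h2 : ((k:ℚ)+1) ≠ 0 := by positivity
  field_simp
  ring

/-- upper negation -/
lemma gchoose_neg (x : ℚ) (n : ℕ) :
    gchoose x n = (-1)^n * gchoose ((n:ℚ) - 1 - x) n := by
  rw [gchoose, gchoose]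
  rw [← Finset.prod_range_reflect (fun i => ((n:ℚ) - 1 - x - i)) n]
  have : ∀ j ∈ Finset.range n, ((n:ℚ) - 1 - x - ((n - 1 - j : ℕ) : ℚ)) = -(x - j) := by
    intro j hj
    have hj' : j < n := Finset.mem_range.mp hj
    have : ((n - 1 - j : ℕ) : ℚ) = (n:ℚ) - 1 - j := by
      have : n - 1 - j = n - (1 + j) := by omega
      rw [this]
      push_cast [Nat.cast_sub (by omega : 1 + j ≤ n)]
      ring
    rw [this]; ring
  rw [Finset.prod_congr rfl this]
  have h4 : ∏ j ∈ Finset.range n, -(x - (j:ℚ)) = (-1)^n * ∏ j ∈ Finset.range n, (x - (j:ℚ)) := by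
    rw [show (∏ j ∈ Finset.range n, -(x - (j:ℚ))) = ∏ j ∈ Finset.range n, (-1) * (x - (j:ℚ))
      from Finset.prod_congr rfl (fun j _ => by ring)]
    rw [Finset.prod_mul_distrib, Finset.prod_const, Finset.card_range]
  rw [h4]
  have h5 : ((-1:ℚ))^n * (-1:ℚ)^n = 1 := by rw [← mul_pow]; norm_num
  rw [← mul_div_assoc, ← mul_assoc, h5, one_mul]

lemma gchoose_nat_zero (N : ℕ) (hN : 1 ≤ N) : gchoose ((N:ℚ) - 1) N = 0 := by
  rw [gchoose]
  rw [Finset.prod_eq_zero (Finset.mem_range.mpr (by omega : N - 1 < N))]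
  · simp
  · have : ((N - 1 : ℕ) : ℚ) = (N:ℚ) - 1 := by
      push_cast [Nat.cast_sub hN]; simp
    rw [this]; ring

lemma succ_mul_gchoose (x : ℚ) (k : ℕ) :
    ((k:ℚ)+1) * gchoose x (k+1) = x * gchoose (x-1) k := by
  rw [gchoose_succ']
  field_simp

lemma gchoose_vandermonde : ∀ (N : ℕ) (u v : ℚ),
    ∑ j ∈ Finset.range (N+1), gchoose u j * gchoose v (N - j) = gchoose (u+v) N := by
  intro N
  induction N with
  | zero => intro u v; simp [gchoose_zero]
  | succ N ih =>
    intro u v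
    have hN1 : ((N:ℚ)+1) ≠ 0 := by positivity
    apply mul_left_cancel₀ hN1
    rw [Finset.mul_sum]
    have split : ∀ j ∈ Finset.range (N+2),
        ((N:ℚ)+1) * (gchoose u j * gchoose v (N+1-j))
          = (j:ℚ) * (gchoose u j * gchoose v (N+1-j))
            + ((N+1-j : ℕ):ℚ) * (gchoose u j * gchoose v (N+1-j)) := by
      intro j hj
      have hj' : j ≤ N+1 := by simpa [Nat.lt_succ_iff] using hj
      have hc : ((N+1-j:ℕ):ℚ) = (N:ℚ)+1-j := by
        push_cast [Nat.cast_sub hj']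
        ring
      rw [hc]; ring
    rw [Finset.sum_congr rfl split, Finset.sum_add_distrib]
    have hS1 : ∑ j ∈ Finset.range (N+2), (j:ℚ) * (gchoose u j * gchoose v (N+1-j))
        = u * gchoose (u-1+v) N := by
      rw [Finset.sum_range_succ']
      simp only [Nat.cast_zero, zero_mul, add_zero]
      have step : ∀ j ∈ Finset.range (N+1),
          ((j+1:ℕ):ℚ) * (gchoose u (j+1) * gchoose v (N+1-(j+1)))
            = u * (gchoose (u-1) j * gchoose v (N-j)) := by
        intro j hj
        have h1 : N+1-(j+1) = N-j := by omega
        have h2 : ((j+1:ℕ):ℚ) = (j:ℚ)+1 := by push_cast; ring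
        rw [h1, h2, ← mul_assoc, succ_mul_gchoose, mul_assoc]
      rw [Finset.sum_congr rfl step, ← Finset.mul_sum, ih]
    have hS2 : ∑ j ∈ Finset.range (N+2), ((N+1-j:ℕ):ℚ) * (gchoose u j * gchoose v (N+1-j))
        = v * gchoose (u+(v-1)) N := by
      rw [Finset.sum_range_succ]
      simp only [Nat.sub_self, Nat.cast_zero, zero_mul, add_zero]
      have step : ∀ j ∈ Finset.range (N+1),
          ((N+1-j:ℕ):ℚ) * (gchoose u j * gchoose v (N+1-j))
            = v * (gchoose u j * gchoose (v-1) (N-j)) := by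
        intro j hj
        have hj' : j ≤ N := by simpa [Nat.lt_succ_iff] using hj
        have h1 : N+1-j = (N-j)+1 := by omega
        have h2 : ((N+1-j:ℕ):ℚ) = ((N-j:ℕ):ℚ)+1 := by rw [h1]; push_cast; ring
        rw [h2, h1]
        calc (((N-j:ℕ):ℚ)+1) * (gchoose u j * gchoose v ((N-j)+1))
            = gchoose u j * ((((N-j:ℕ):ℚ)+1) * gchoose v ((N-j)+1)) := by ring
          _ = gchoose u j * (v * gchoose (v-1) (N-j)) := by rw [succ_mul_gchoose]
          _ = v * (gchoose u j * gchoose (v-1) (N-j)) := by ring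
      rw [Finset.sum_congr rfl step, ← Finset.mul_sum, ih]
    rw [hS1, hS2]
    have e1 : u - 1 + v = u + v - 1 := by ring
    have e2 : u + (v - 1) = u + v - 1 := by ring
    rw [e1, e2, ← add_mul, ← succ_mul_gchoose (u+v) N]

lemma keyP (m : ℕ) : ∀ (c : ℕ) (u : ℚ),
    ((c:ℚ)+m+1) * ∑ i ∈ Finset.range (m+1), gchoose u (c+1+i) * gchoose ((c:ℚ)+m-u) (m-i)
    = ((c:ℚ)+1) * (gchoose u (c+1) * gchoose ((c:ℚ)+m-u) m) := by
  induction m with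
  | zero => intro c u; simp [gchoose_zero]
  | succ m ih =>
    intro c u
    have hm1 : ((m:ℚ)+1) ≠ 0 := by positivity
    have hc2 : ((c:ℚ)+2) ≠ 0 := by positivity
    have hcast : ((c:ℚ) + ((m:ℕ)+1 : ℕ) - u) = ((c:ℚ)+m-u) + 1 := by push_cast; ring
    set v : ℚ := (c:ℚ)+m-u with hv
    rw [hcast]
    -- decompose the sum
    have hT : (∑ i ∈ Finset.range (m+1+1), gchoose u (c+1+i) * gchoose (v+1) (m+1-i))
        = ((gchoose u (c+1) * gchoose v (m+1)
            + ∑ i ∈ Finset.range m, gchoose u (c+2+i) * gchoose v (m-i))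
          + ∑ i ∈ Finset.range (m+1), gchoose u (c+1+i) * gchoose v (m-i))
          + gchoose u (c+m+2) := by
      rw [Finset.sum_range_succ]
      have hlast : m+1-(m+1) = 0 := by omega
      rw [hlast, gchoose_zero, mul_one]
      have hstep : ∀ i ∈ Finset.range (m+1),
          gchoose u (c+1+i) * gchoose (v+1) (m+1-i)
            = gchoose u (c+1+i) * gchoose v (m+1-i)
              + gchoose u (c+1+i) * gchoose v (m-i) := by
        intro i hi
        have h1 : m+1-i = (m-i)+1 := by
          have : i ≤ m := by simpa [Nat.lt_succ_iff] using hi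
          omega
        rw [h1, gchoose_pascal]
        ring
      rw [Finset.sum_congr rfl hstep, Finset.sum_add_distrib]
      have hA : ∑ i ∈ Finset.range (m+1), gchoose u (c+1+i) * gchoose v (m+1-i)
          = gchoose u (c+1) * gchoose v (m+1)
            + ∑ i ∈ Finset.range m, gchoose u (c+2+i) * gchoose v (m-i) := by
        rw [Finset.sum_range_succ']
        have hstep2 : ∀ i ∈ Finset.range m,
            gchoose u (c+1+(i+1)) * gchoose v (m+1-(i+1))
              = gchoose u (c+2+i) * gchoose v (m-i) := by
          intro i hi
          have e1 : c+1+(i+1) = c+2+i := by omega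
          have e2 : m+1-(i+1) = m-i := by omega
          rw [e1, e2]
        rw [Finset.sum_congr rfl hstep2]
        simp only [add_zero, Nat.sub_zero]
        ring
      have e8 : c+1+(m+1) = c+m+2 := by omega
      rw [hA, e8]
    rw [hT]
    -- IH at (c+1, u+1)
    have ih2 : ((c:ℚ)+m+2)
          * (((∑ i ∈ Finset.range m, gchoose u (c+2+i) * gchoose v (m-i))
              + gchoose u (c+m+2))
            + ∑ i ∈ Finset.range (m+1), gchoose u (c+1+i) * gchoose v (m-i))
        = ((c:ℚ)+2) * (gchoose (u+1) (c+2) * gchoose v m) := by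
      have h0 := ih (c+1) (u+1)
      have hcast2 : (((c+1:ℕ):ℚ)+m-(u+1)) = v := by push_cast [hv]; ring
      rw [hcast2] at h0
      have hsplit : ∑ i ∈ Finset.range (m+1), gchoose (u+1) (c+1+1+i) * gchoose v (m-i)
          = ((∑ i ∈ Finset.range m, gchoose u (c+2+i) * gchoose v (m-i))
              + gchoose u (c+m+2))
            + ∑ i ∈ Finset.range (m+1), gchoose u (c+1+i) * gchoose v (m-i) := by
        have hstep3 : ∀ i ∈ Finset.range (m+1),
            gchoose (u+1) (c+1+1+i) * gchoose v (m-i)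
              = gchoose u (c+2+i) * gchoose v (m-i)
                + gchoose u (c+1+i) * gchoose v (m-i) := by
          intro i hi
          have e1 : c+1+1+i = (c+1+i)+1 := by omega
          rw [e1, gchoose_pascal]
          have e2 : c+1+i+1 = c+2+i := by omega
          rw [e2]
          ring
        rw [Finset.sum_congr rfl hstep3, Finset.sum_add_distrib]
        congr 1
        rw [Finset.sum_range_succ]
        have e3 : m - m = 0 := by omega
        have e4 : c+2+m = c+m+2 := by omega
        rw [e3, e4, gchoose_zero, mul_one]
      rw [hsplit] at h0
      have hcast3 : (((c+1:ℕ):ℚ)+m+1) = (c:ℚ)+m+2 := by push_cast; ring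
      have hcast4 : (((c+1:ℕ):ℚ)+1) = (c:ℚ)+2 := by push_cast; ring
      rw [hcast3, hcast4] at h0
      exact h0
    -- clean up ih2's right-hand side
    have ih2' : ((c:ℚ)+m+2)
          * (((∑ i ∈ Finset.range m, gchoose u (c+2+i) * gchoose v (m-i))
              + gchoose u (c+m+2))
            + ∑ i ∈ Finset.range (m+1), gchoose u (c+1+i) * gchoose v (m-i))
        = (u+1) * (gchoose u (c+1) * gchoose v m) := by
      rw [ih2]
      have e7 : gchoose (u+1) (c+2) = (u+1) * gchoose u (c+1)/((c:ℚ)+2) := by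
        have h := gchoose_succ' (u+1) (c+1)
        rw [add_sub_cancel_right] at h
        have e9 : c+1+1 = c+2 := by omega
        rw [e9] at h
        rw [h]
        push_cast
        ring
      rw [e7]
      field_simp
    -- multiplied absorption identities
    have e5m : ((m:ℚ)+1) * gchoose v (m+1) = gchoose v m * (v - m) := by
      rw [gchoose_succ]
      field_simp
    have e6m : ((m:ℚ)+1) * gchoose (v+1) (m+1) = (v+1) * gchoose v m := by
      have h := gchoose_succ' (v+1) m
      rw [add_sub_cancel_right] at h
      rw [h]
      field_simp
    push_cast
    apply mul_left_cancel₀ hm1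
    rw [hv] at e5m e6m ih2' ⊢
    linear_combination ((m:ℚ)+1) * ih2' + ((c:ℚ)+m+2) * gchoose u (c+1) * e5m
      - ((c:ℚ)+1) * gchoose u (c+1) * e6m

/-- Proposition 5.1 (iii): the alternating sum defining the expansion coefficient
`c_{ns+p, nr-p}` (with the common power of α removed) equals its closed form. -/
theorem coefficient_closed_form (n p r s : ℕ) (hn : 2 ≤ n) (hp1 : 1 ≤ p) (hpn : p ≤ n)
    (hr : 1 ≤ r) :
    -(((n : ℚ) * r - p)) * ∑ k ∈ Finset.range (s + 1),
        (-1 : ℚ) ^ (r + k) * gchoose ((s : ℚ) + (p : ℚ) / (n : ℚ)) (s - k)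
          * gchoose ((k : ℚ) + (p : ℚ) / (n : ℚ)) (r + k)
      = ((p : ℚ) * r / ((r : ℚ) + s)) * gchoose ((r : ℚ) - (p : ℚ) / (n : ℚ)) r
          * gchoose ((s : ℚ) + (p : ℚ) / (n : ℚ)) s := by
  obtain ⟨m, rfl⟩ : ∃ m, r = m+1 := ⟨r-1, by omega⟩
  have hn0 : (n:ℚ) ≠ 0 := Nat.cast_ne_zero.mpr (by omega)
  -- step 1: reflect and negate
  have h1 : (∑ k ∈ Finset.range (s+1),
        (-1:ℚ)^(m+1+k) * gchoose ((s:ℚ)+(p:ℚ)/(n:ℚ)) (s-k)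
          * gchoose ((k:ℚ)+(p:ℚ)/(n:ℚ)) (m+1+k))
      = ∑ j ∈ Finset.range (s+1), gchoose ((s:ℚ)+(p:ℚ)/(n:ℚ)) j
          * gchoose ((s:ℚ)+(m:ℚ)-((s:ℚ)+(p:ℚ)/(n:ℚ))) (m+1+s-j) := by
    rw [← Finset.sum_range_reflect]
    apply Finset.sum_congr rfl
    intro j hj
    have hj' : j ≤ s := by simpa [Nat.lt_succ_iff] using hj
    have e1 : s+1-1-j = s-j := by omega
    have e2 : s-(s-j) = j := by omega
    have e3 : m+1+(s-j) = m+1+s-j := by omega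
    have ec : ((s-j:ℕ):ℚ) = (s:ℚ)-(j:ℚ) := by rw [Nat.cast_sub hj']
    rw [e1, e2, e3, ec]
    rw [gchoose_neg ((s:ℚ)-(j:ℚ)+(p:ℚ)/(n:ℚ)) (m+1+s-j)]
    have ec2 : ((m+1+s-j:ℕ):ℚ) = (m:ℚ)+1+(s:ℚ)-(j:ℚ) := by
      rw [Nat.cast_sub (by omega : j ≤ m+1+s)]
      push_cast; ring
    rw [ec2]
    rw [show ((m:ℚ)+1+(s:ℚ)-(j:ℚ)) - 1 - ((s:ℚ)-(j:ℚ)+(p:ℚ)/(n:ℚ))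
        = (s:ℚ)+(m:ℚ)-((s:ℚ)+(p:ℚ)/(n:ℚ)) from by ring]
    have hsq : ((-1:ℚ))^(m+1+s-j) * ((-1:ℚ))^(m+1+s-j) = 1 := by
      rw [← mul_pow]; norm_num
    linear_combination (gchoose ((s:ℚ)+(p:ℚ)/(n:ℚ)) j
      * gchoose ((s:ℚ)+(m:ℚ)-((s:ℚ)+(p:ℚ)/(n:ℚ))) (m+1+s-j)) * hsq
  -- step 2: full Vandermonde sum is zero
  have h2 : (∑ j ∈ Finset.range (m+1+s+1), gchoose ((s:ℚ)+(p:ℚ)/(n:ℚ)) j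
        * gchoose ((s:ℚ)+(m:ℚ)-((s:ℚ)+(p:ℚ)/(n:ℚ))) (m+1+s-j)) = 0 := by
    rw [gchoose_vandermonde (m+1+s)]
    rw [show ((s:ℚ)+(p:ℚ)/(n:ℚ)) + ((s:ℚ)+(m:ℚ)-((s:ℚ)+(p:ℚ)/(n:ℚ)))
        = ((m+1+s:ℕ):ℚ) - 1 from by push_cast; ring]
    exact gchoose_nat_zero (m+1+s) (by omega)
  -- step 3: split the range
  have h3 : (∑ j ∈ Finset.range (s+1), gchoose ((s:ℚ)+(p:ℚ)/(n:ℚ)) j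
        * gchoose ((s:ℚ)+(m:ℚ)-((s:ℚ)+(p:ℚ)/(n:ℚ))) (m+1+s-j))
      = - ∑ i ∈ Finset.range (m+1), gchoose ((s:ℚ)+(p:ℚ)/(n:ℚ)) (s+1+i)
          * gchoose ((s:ℚ)+(m:ℚ)-((s:ℚ)+(p:ℚ)/(n:ℚ))) (m-i) := by
    have hsplit := Finset.sum_range_add (fun j => gchoose ((s:ℚ)+(p:ℚ)/(n:ℚ)) j
        * gchoose ((s:ℚ)+(m:ℚ)-((s:ℚ)+(p:ℚ)/(n:ℚ))) (m+1+s-j)) (s+1) (m+1)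
    rw [show s+1+(m+1) = m+1+s+1 from by omega, h2] at hsplit
    have htail : ∀ i ∈ Finset.range (m+1),
        gchoose ((s:ℚ)+(p:ℚ)/(n:ℚ)) (s+1+i)
            * gchoose ((s:ℚ)+(m:ℚ)-((s:ℚ)+(p:ℚ)/(n:ℚ))) (m+1+s-(s+1+i))
          = gchoose ((s:ℚ)+(p:ℚ)/(n:ℚ)) (s+1+i)
            * gchoose ((s:ℚ)+(m:ℚ)-((s:ℚ)+(p:ℚ)/(n:ℚ))) (m-i) := by
      intro i hi
      rw [show m+1+s-(s+1+i) = m-i from by omega]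
    rw [Finset.sum_congr rfl htail] at hsplit
    linarith [hsplit]
  -- the key evaluation
  have hs1 : ((s:ℚ)+1) ≠ 0 := by positivity
  have hm1 : ((m:ℚ)+1) ≠ 0 := by positivity
  have hsm : ((s:ℚ)+(m:ℚ)+1) ≠ 0 := by positivity
  have hkey := keyP m s ((s:ℚ)+(p:ℚ)/(n:ℚ))
  rw [gchoose_succ ((s:ℚ)+(p:ℚ)/(n:ℚ)) s] at hkey
  rw [show ((s:ℚ)+1) * (gchoose ((s:ℚ)+(p:ℚ)/(n:ℚ)) s * ((s:ℚ)+(p:ℚ)/(n:ℚ) - (s:ℚ))/((s:ℚ)+1)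
          * gchoose ((s:ℚ)+(m:ℚ)-((s:ℚ)+(p:ℚ)/(n:ℚ))) m)
      = gchoose ((s:ℚ)+(p:ℚ)/(n:ℚ)) s * ((p:ℚ)/(n:ℚ))
          * gchoose ((s:ℚ)+(m:ℚ)-((s:ℚ)+(p:ℚ)/(n:ℚ))) m from by field_simp; ring] at hkey
  have hT : (∑ i ∈ Finset.range (m+1), gchoose ((s:ℚ)+(p:ℚ)/(n:ℚ)) (s+1+i)
        * gchoose ((s:ℚ)+(m:ℚ)-((s:ℚ)+(p:ℚ)/(n:ℚ))) (m-i))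
      = gchoose ((s:ℚ)+(p:ℚ)/(n:ℚ)) s * ((p:ℚ)/(n:ℚ))
          * gchoose ((s:ℚ)+(m:ℚ)-((s:ℚ)+(p:ℚ)/(n:ℚ))) m / ((s:ℚ)+(m:ℚ)+1) := by
    rw [eq_div_iff hsm]
    linear_combination hkey
  -- finish
  rw [h1, h3, hT]
  push_cast
  rw [gchoose_succ' ((m:ℚ)+1-(p:ℚ)/(n:ℚ)) m]
  rw [show ((m:ℚ)+1-(p:ℚ)/(n:ℚ)-1) = (s:ℚ)+(m:ℚ)-((s:ℚ)+(p:ℚ)/(n:ℚ)) from by ring]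
  field_simp
  ring
end

section
/- For every integer r ≥ 0 and every rational number x, one has 1 - ∑_{l=0}^{r} (-1)^l · C(x+r+1, r+1-l) · C(x-1+l, l) = (-1)^{r+1} · C(x+r, r+1). -/
open Polynomial Finset

/-- Polynomial version of `gchoose`. -/
noncomputable def gpoly (k : ℕ) : Polynomial ℚ :=
  Polynomial.C ((Nat.factorial k : ℚ)⁻¹) * descPochhammer ℚ k

lemma descPochhammer_eval_eq_prod (k : ℕ) (x : ℚ) :
    (descPochhammer ℚ k).eval x = ∏ i ∈ Finset.range k, (x - i) := by
  induction k with
  | zero => simp [descPochhammer_zero]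
  | succ k ih =>
    rw [descPochhammer_succ_right, Finset.prod_range_succ, ← ih]
    simp [mul_comm]

lemma gpoly_eval (k : ℕ) (x : ℚ) : (gpoly k).eval x = gchoose x k := by
  simp [gpoly, gchoose, descPochhammer_eval_eq_prod, div_eq_inv_mul]

lemma gchoose_natCast (n k : ℕ) : gchoose (n : ℚ) k = (n.choose k : ℚ) := by
  rw [← gpoly_eval, gpoly]
  simp only [eval_mul, eval_C, descPochhammer_eval_eq_descFactorial]
  rw [Nat.descFactorial_eq_factorial_mul_choose]
  push_cast
  rw [← mul_assoc, inv_mul_cancel₀ (by exact_mod_cast (Nat.factorial_pos k).ne')]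
  ring

/-- Vandermonde for a natural number second argument. -/
lemma gchoose_vandermonde_nat (m n : ℕ) (y : ℚ) :
    ∑ l ∈ Finset.range (m + 1), gchoose y (m - l) * gchoose (n : ℚ) l
      = gchoose (y + n) m := by
  have key : (∑ l ∈ Finset.range (m + 1), Polynomial.C (gchoose (n : ℚ) l) * gpoly (m - l))
      = (gpoly m).comp (Polynomial.X + Polynomial.C (n : ℚ)) := by
    apply Polynomial.eq_of_infinite_eval_eq
    apply Set.Infinite.mono (s := Set.range (Nat.cast : ℕ → ℚ))
    · rintro _ ⟨j, rfl⟩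
      simp only [Set.mem_setOf_eq, eval_finset_sum, eval_mul, eval_C, gpoly_eval, eval_comp,
        eval_add, eval_X]
      have : ∀ l, gchoose ((j : ℚ)) (m - l) = ((j.choose (m - l) : ℕ) : ℚ) := fun l =>
        gchoose_natCast j (m - l)
      rw [← Nat.cast_add, gchoose_natCast]
      calc ∑ l ∈ Finset.range (m + 1), gchoose (n : ℚ) l * gchoose (j : ℚ) (m - l)
          = ∑ l ∈ Finset.range (m + 1), ((j.choose (m - l) * n.choose l : ℕ) : ℚ) := by
            refine Finset.sum_congr rfl fun l _ => ?_
            rw [gchoose_natCast, gchoose_natCast]; push_cast; ring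
        _ = (((j + n).choose m : ℕ) : ℚ) := by
            rw [← Nat.cast_sum]
            congr 1
            calc ∑ l ∈ Finset.range (m + 1), j.choose (m - l) * n.choose l
                = ∑ l ∈ Finset.range (m + 1),
                    (fun i => j.choose i * n.choose (m - i)) (m + 1 - 1 - l) := by
                  refine Finset.sum_congr rfl fun l hl => ?_
                  have hl' : l ≤ m := Nat.lt_succ_iff.mp (Finset.mem_range.mp hl)
                  simp only []
                  rw [show m + 1 - 1 - l = m - l from rfl, Nat.sub_sub_self hl']
              _ = ∑ l ∈ Finset.range (m + 1), j.choose l * n.choose (m - l) := by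
                  simpa using
                    Finset.sum_range_reflect (fun i => j.choose i * n.choose (m - i)) (m + 1)
              _ = (j + n).choose m := by
                  rw [Nat.add_choose_eq, Finset.Nat.sum_antidiagonal_eq_sum_range_succ
                    (f := fun a b => j.choose a * n.choose b)]
    · exact Set.infinite_range_of_injective Nat.cast_injective
  have := congrArg (Polynomial.eval y) key
  simp only [eval_finset_sum, eval_mul, eval_C, gpoly_eval, eval_comp, eval_add, eval_X] at this
  rw [← this]
  exact Finset.sum_congr rfl fun l _ => mul_comm _ _

/-- Vandermonde's identity for generalized binomial coefficients. -/
lemma gchoose_vandermonde_s7 (m : ℕ) (y z : ℚ) :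
    ∑ l ∈ Finset.range (m + 1), gchoose y (m - l) * gchoose z l
      = gchoose (y + z) m := by
  have key : (∑ l ∈ Finset.range (m + 1), Polynomial.C (gchoose y (m - l)) * gpoly l)
      = (gpoly m).comp (Polynomial.C y + Polynomial.X) := by
    apply Polynomial.eq_of_infinite_eval_eq
    apply Set.Infinite.mono (s := Set.range (Nat.cast : ℕ → ℚ))
    · rintro _ ⟨j, rfl⟩
      simp only [Set.mem_setOf_eq, eval_finset_sum, eval_mul, eval_C, gpoly_eval, eval_comp,
        eval_add, eval_X]
      exact gchoose_vandermonde_nat m j y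
    · exact Set.infinite_range_of_injective Nat.cast_injective
  have := congrArg (Polynomial.eval z) key
  simp only [eval_finset_sum, eval_mul, eval_C, gpoly_eval, eval_comp, eval_add, eval_X] at this
  exact this

/-- Upper negation: C(x-1+l, l) = (-1)^l C(-x, l). -/
lemma gchoose_upper_neg (x : ℚ) (l : ℕ) :
    gchoose (x - 1 + l) l = (-1 : ℚ) ^ l * gchoose (-x) l := by
  have hp : ∏ i ∈ Finset.range l, (x - 1 + l - i)
      = (-1 : ℚ) ^ l * ∏ i ∈ Finset.range l, (-x - i) := by
    rw [← Finset.prod_range_reflect (fun i => x - 1 + l - i) l]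
    have : ∀ i ∈ Finset.range l,
        (fun i => x - 1 + l - i) ((l - 1 - i : ℕ)) = (-1 : ℚ) * (-x - i) := by
      intro i hi
      have hil : i < l := Finset.mem_range.mp hi
      have hc : ((l - 1 - i : ℕ) : ℚ) = (l : ℚ) - 1 - i := by
        have h2 : l - 1 - i = l - (i + 1) := by omega
        rw [h2, Nat.cast_sub hil]
        push_cast
        ring
      simp only [hc]
      ring
    rw [Finset.prod_congr rfl this, Finset.prod_mul_distrib, Finset.prod_const,
      Finset.card_range]
  unfold gchoose
  rw [hp]
  ring

/-- Lemma 7.2 of the paper. -/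
theorem lemma_7_2 (r : ℕ) (x : ℚ) :
    1 - ∑ l ∈ Finset.range (r + 1),
        (-1 : ℚ) ^ l * gchoose (x + (r : ℚ) + 1) (r + 1 - l) * gchoose (x - 1 + (l : ℚ)) l
      = (-1 : ℚ) ^ (r + 1) * gchoose (x + (r : ℚ)) (r + 1) := by
  have hT : ∑ l ∈ Finset.range (r + 2),
      (-1 : ℚ) ^ l * gchoose (x + (r : ℚ) + 1) (r + 1 - l) * gchoose (x - 1 + (l : ℚ)) l
      = 1 := by
    have : ∀ l ∈ Finset.range (r + 2),
        (-1 : ℚ) ^ l * gchoose (x + (r : ℚ) + 1) (r + 1 - l) * gchoose (x - 1 + (l : ℚ)) l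
        = gchoose (x + (r : ℚ) + 1) (r + 1 - l) * gchoose (-x) l := by
      intro l _
      rw [gchoose_upper_neg, show (-1 : ℚ) ^ l * gchoose (x + (r : ℚ) + 1) (r + 1 - l) *
          ((-1 : ℚ) ^ l * gchoose (-x) l) = ((-1 : ℚ) ^ l * (-1 : ℚ) ^ l) *
          (gchoose (x + (r : ℚ) + 1) (r + 1 - l) * gchoose (-x) l) by ring,
        ← pow_add, ← two_mul, pow_mul]
      norm_num
    rw [Finset.sum_congr rfl this]
    have := gchoose_vandermonde_s7 (r + 1) (x + (r : ℚ) + 1) (-x)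
    rw [show x + (r : ℚ) + 1 + -x = ((r + 1 : ℕ) : ℚ) by push_cast; ring] at this
    rw [show r + 2 = (r + 1) + 1 from rfl, this, gchoose_natCast, Nat.choose_self, Nat.cast_one]
  rw [Finset.sum_range_succ] at hT
  have hlast : (-1 : ℚ) ^ (r + 1) * gchoose (x + (r : ℚ) + 1) (r + 1 - (r + 1))
      * gchoose (x - 1 + ((r + 1 : ℕ) : ℚ)) (r + 1)
      = (-1 : ℚ) ^ (r + 1) * gchoose (x + (r : ℚ)) (r + 1) := by
    rw [Nat.sub_self]
    have h0 : gchoose (x + (r : ℚ) + 1) 0 = 1 := by simp [gchoose]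
    rw [h0, show x - 1 + ((r + 1 : ℕ) : ℚ) = x + (r : ℚ) by push_cast; ring]
    ring
  rw [hlast] at hT
  linarith [hT]
end

section
/- Let n ≥ 2 and 1 ≤ p ≤ n be integers, and let r ≥ 1, s ≥ 0 be integers. Then (-1)^{r+s+1} · ∑_{i=0}^{s} ((ns+p)(nr-p)/(ni+p)) · C(-i - p/n, s-i) · C(i + p/n, r+i) = (p·r/(r+s)) · C(s + p/n, s) · C(r - p/n, r). -/
open Finset
open scoped Nat

lemma gchoose_mul_factorial (y : ℚ) (k : ℕ) :
    gchoose y k * k ! = ∏ j ∈ range k, (y - j) := by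
  rw [gchoose, div_mul_cancel₀ _ (by positivity)]

lemma prod_range_sub_eq_prod_range_add (y : ℚ) (k : ℕ) :
    ∏ j ∈ range k, (y + k - (j + 1)) = ∏ j ∈ range k, (y + j) := by
  rw [← prod_range_reflect (fun j => y + (j : ℚ)) k]
  refine prod_congr rfl fun j hj => ?_
  rw [Nat.sub_sub, Nat.cast_sub (by simpa [add_comm] using mem_range.mp hj)]
  push_cast
  ring

lemma gchoose_neg_mul_factorial (y : ℚ) (k : ℕ) :
    gchoose (-y) k * k ! = (-1) ^ k * ∏ j ∈ range k, (y + j) := by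
  have sign := pow_card_mul_prod (s := range k) (f := fun j => y + (j : ℚ)) (b := -1)
  rw [card_range] at sign
  rw [gchoose_mul_factorial, sign]
  exact prod_congr rfl fun j _ => by ring

lemma gchoose_add_mul_factorial (x : ℚ) (i r : ℕ) :
    gchoose (i + x) (r + 1 + i) * (r + 1 + i)! =
      (∏ j ∈ range (i + 1), (x + j)) * ∏ j ∈ range r, (x - 1 - j) := by
  rw [gchoose_mul_factorial, show r + 1 + i = (i + 1) + r by ring, prod_range_add,
    ← prod_range_sub_eq_prod_range_add]
  congr 1 <;> refine prod_congr rfl fun j _ => ?_ <;> push_cast <;> ring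

lemma mul_gchoose_add_self_mul_factorial (x : ℚ) (s : ℕ) :
    x * (gchoose (s + x) s * s !) = ∏ j ∈ range (s + 1), (x + j) := by
  rw [gchoose_mul_factorial, prod_range_succ']
  push_cast
  rw [prod_congr rfl fun (j : ℕ) _ => show x + ((j : ℚ) + 1) = x + 1 + j by ring,
    ← prod_range_sub_eq_prod_range_add, mul_comm, add_zero]
  congr 1
  exact prod_congr rfl fun j _ => by ring

lemma gchoose_sub_self_mul_factorial (x : ℚ) (r : ℕ) :
    gchoose (r - x) r * r ! = (-1) ^ r * ∏ j ∈ range r, (x - 1 - j) := by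
  rw [show (r : ℚ) - x = -(x - r) by ring, gchoose_neg_mul_factorial,
    ← prod_range_sub_eq_prod_range_add]
  congr 1
  exact prod_congr rfl fun j _ => by ring

lemma sum_range_neg_one_pow_div_factorial_mul_factorial (r s : ℕ) :
    ∑ i ∈ range (s + 1), (-1 : ℚ) ^ (s - i) / ((s - i)! * (r + 1 + i)!) =
      (-1) ^ s * (r + s).choose s / (r + 1 + s)! := by
  have alternating : ∑ k ∈ range (s + 1), (-1 : ℚ) ^ k * (r + s + 1).choose k =
      (-1) ^ s * (r + s).choose s := by
    exact_mod_cast Int.alternating_sum_range_choose_eq_choose (n := r + s) (m := s)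
  rw [← sum_range_reflect, add_tsub_cancel_right, ← alternating, sum_div]
  refine sum_congr rfl fun k hk => ?_
  have hk : k ≤ s := Nat.lt_succ_iff.mp (mem_range.mp hk)
  rw [Nat.sub_sub_self hk, Nat.cast_choose ℚ (by omega : k ≤ r + s + 1),
    show r + 1 + (s - k) = r + s + 1 - k by omega, show r + 1 + s = r + s + 1 by omega]
  field_simp

lemma summand_eq_prod_mul_prod (x : ℚ) (r s i : ℕ) (hi : i ≤ s) (hx : x + i ≠ 0) :
    (x + s) * (((r + 1 : ℕ) : ℚ) - x) / (x + i) * gchoose (-(i : ℚ) - x) (s - i)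
        * gchoose (i + x) (r + 1 + i) =
      -((-1) ^ (s - i) / ((s - i)! * (r + 1 + i)!)) *
        ((∏ j ∈ range (s + 1), (x + j)) * ∏ j ∈ range (r + 1), (x - 1 - j)) := by
  have upper := gchoose_neg_mul_factorial (i + x) (s - i)
  have lower := gchoose_add_mul_factorial x i r
  have split : (∏ j ∈ range (i + 1), (x + j)) * ∏ j ∈ range (s - i), (i + x + j) =
      (x + i) * ∏ j ∈ range s, (x + j) := by
    rw [prod_range_succ, mul_right_comm, mul_comm _ (x + i)]
    congr 1
    rw [← Nat.add_sub_cancel' hi, prod_range_add, Nat.add_sub_cancel_left]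
    congr 1
    exact prod_congr rfl fun j _ => by push_cast; ring
  rw [neg_add', ← eq_div_iff (by positivity)] at upper
  rw [← eq_div_iff (by positivity)] at lower
  calc _ = (-1) ^ (s - i) / ((s - i)! * (r + 1 + i)!) * ((x + s) * (((r + 1 : ℕ) : ℚ) - x) *
        (((∏ j ∈ range (i + 1), (x + j)) * ∏ j ∈ range (s - i), (i + x + j)) / (x + i)) *
          ∏ j ∈ range r, (x - 1 - j)) := by rw [upper, lower]; ring
    _ = (-1) ^ (s - i) / ((s - i)! * (r + 1 + i)!) * ((x + s) * (((r + 1 : ℕ) : ℚ) - x) *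
          (∏ j ∈ range s, (x + j)) * ∏ j ∈ range r, (x - 1 - j)) := by
      rw [split, mul_div_cancel_left₀ _ hx]
    _ = _ := by
      rw [prod_range_succ, prod_range_succ (fun j => x - 1 - (j : ℚ))]
      push_cast
      ring

theorem neg_one_pow_mul_sum_gchoose_mul_gchoose (x : ℚ) (r s : ℕ) (hx : ∀ i ≤ s, x + i ≠ 0) :
    (-1) ^ (r + 1 + s + 1) * ∑ i ∈ range (s + 1), (x + s) * (((r + 1 : ℕ) : ℚ) - x) / (x + i)
        * gchoose (-(i : ℚ) - x) (s - i) * gchoose (i + x) (r + 1 + i) =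
      x * ((r + 1 : ℕ) : ℚ) / (((r + 1 : ℕ) : ℚ) + s) * gchoose (s + x) s
        * gchoose (((r + 1 : ℕ) : ℚ) - x) (r + 1) := by
  have hx0 : x ≠ 0 := by simpa using hx 0 (Nat.zero_le s)
  rw [sum_congr rfl fun i hi => summand_eq_prod_mul_prod x r s i (Nat.lt_succ_iff.mp (mem_range.mp hi))
    (hx i (Nat.lt_succ_iff.mp (mem_range.mp hi)))]
  rw [← sum_mul, sum_neg_distrib, sum_range_neg_one_pow_div_factorial_mul_factorial]
  have hA := mul_gchoose_add_self_mul_factorial x s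
  have hB : ∏ j ∈ range (r + 1), (x - 1 - j) =
      (-1) ^ (r + 1) * (gchoose (((r + 1 : ℕ) : ℚ) - x) (r + 1) * (r + 1)!) := by
    rw [gchoose_sub_self_mul_factorial, ← mul_assoc, ← mul_pow]
    norm_num
  have hsign : (-1 : ℚ) ^ (r + 1 + s + 1) * (-1) ^ s * (-1) ^ (r + 1) = -1 := by
    rw [← pow_add, ← pow_add]
    exact Odd.neg_one_pow ⟨r + s + 1, by ring⟩
  have hfact : ((r + s).choose s * r ! * s ! : ℚ) = (r + s)! := by
    exact_mod_cast Nat.add_choose_mul_factorial_mul_factorial r s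
  have hfact' : ((r + 1 + s)! : ℚ) = (r + 1 + s) * (r + s)! := by
    rw [show r + 1 + s = r + s + 1 by ring, Nat.factorial_succ]
    push_cast
    ring
  rw [← hA, hB, hfact', Nat.factorial_succ r]
  push_cast
  field_simp
  linear_combination (-((r + s).choose s * s ! * r ! * gchoose (s + x) s *
      gchoose (r + 1 - x) (r + 1) : ℚ)) * hsign +
    (gchoose (s + x) s * gchoose (r + 1 - x) (r + 1)) * hfact

theorem prop_8_1_general (n p r s : ℕ) (hn : 2 ≤ n) (hp1 : 1 ≤ p) (hr : 1 ≤ r) :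
    (-1 : ℚ) ^ (r + s + 1) * ∑ i ∈ Finset.range (s + 1),
        (((n : ℚ) * s + p) * ((n : ℚ) * r - p) / ((n : ℚ) * i + p))
          * gchoose (-(i : ℚ) - (p : ℚ) / (n : ℚ)) (s - i)
          * gchoose ((i : ℚ) + (p : ℚ) / (n : ℚ)) (r + i)
      = ((p : ℚ) * r / ((r : ℚ) + s)) * gchoose ((s : ℚ) + (p : ℚ) / (n : ℚ)) s
          * gchoose ((r : ℚ) - (p : ℚ) / (n : ℚ)) r := by
  obtain ⟨r, rfl⟩ := Nat.exists_eq_add_of_le' hr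
  have hn_pos : (0 : ℚ) < n := by exact_mod_cast (by omega : 0 < n)
  set x := (p : ℚ) / n with hx_def
  have hpx : (p : ℚ) = n * x := by rw [hx_def, mul_div_cancel₀ _ hn_pos.ne']
  have hx_pos : 0 < x := div_pos (by exact_mod_cast hp1) hn_pos
  have hxi : ∀ i : ℕ, x + i ≠ 0 := fun i => by positivity
  calc _ = (n : ℚ) * ((-1) ^ (r + 1 + s + 1) * ∑ i ∈ range (s + 1),
        (x + s) * (((r + 1 : ℕ) : ℚ) - x) / (x + i) * gchoose (-(i : ℚ) - x) (s - i)
          * gchoose (i + x) (r + 1 + i)) := by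
        rw [mul_sum, mul_sum, mul_sum]
        refine sum_congr rfl fun i _ => ?_
        rw [hpx]
        field_simp [hxi i]
        ring
    _ = _ := by
      rw [neg_one_pow_mul_sum_gchoose_mul_gchoose x r s fun i _ => hxi i, hpx]
      field_simp

/-- Proposition 8.1 of the paper: \tilde{q}_{ns+p, nr-p} = q_{ns+p, nr-p}. -/
theorem prop_8_1 (n p r s : ℕ) (hn : 2 ≤ n) (hp1 : 1 ≤ p) (hpn : p ≤ n) (hr : 1 ≤ r) :
    (-1 : ℚ) ^ (r + s + 1) * ∑ i ∈ Finset.range (s + 1),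
        (((n : ℚ) * s + p) * ((n : ℚ) * r - p) / ((n : ℚ) * i + p))
          * gchoose (-(i : ℚ) - (p : ℚ) / (n : ℚ)) (s - i)
          * gchoose ((i : ℚ) + (p : ℚ) / (n : ℚ)) (r + i)
      = ((p : ℚ) * r / ((r : ℚ) + s)) * gchoose ((s : ℚ) + (p : ℚ) / (n : ℚ)) s
          * gchoose ((r : ℚ) - (p : ℚ) / (n : ℚ)) r :=
  prop_8_1_general n p r s hn hp1 hr
end
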